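/- arXiv:2302.00975 — 3 statements merged into one kernel-verified Lean document; each statement's English description precedes it below -/
import Mathlib

section
/- For probability measures G, H on ℝ² with finite second moments, the covariance functional S(G) = ∫ y1 y2 dG - (∫ y1 dG)(∫ y2 dG) satisfies the local Lipschitz bound |S(G) - S(H)| ≤ (M2(G) + M2(H)) · W2(G, H), where M2 is the second moment norm and W2 is the Wasserstein distance of order 2. -/
/-! For a coupling `π` of `G` and `H` with coordinates `(X, Y) ~ π`, bilinearity of the covariance
gives `S(G) - S(H) = Cov(X₀, X₁ - Y₁) + Cov(X₀ - Y₀, Y₁)`. By Cauchy–Schwarz a covariance is at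
most the product of the `L²` norms of its arguments, and a coordinate is dominated by the
Euclidean norm, so `|S(G) - S(H)| ≤ (‖X‖₂ + ‖Y‖₂) ‖X - Y‖₂ = (M₂(G) + M₂(H)) ‖X - Y‖₂`.
Taking the infimum over couplings yields `W₂(G, H)`. -/

open MeasureTheory
open scoped ENNReal NNReal

/-- The Wasserstein distance of order 2 on ℝ² (with the Euclidean norm). -/
noncomputable def W2 (μ ν : MeasureTheory.Measure (EuclideanSpace ℝ (Fin 2))) : ℝ≥0∞ :=
  ⨅ (π : MeasureTheory.Measure (EuclideanSpace ℝ (Fin 2) × EuclideanSpace ℝ (Fin 2)))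
    (_ : π.map Prod.fst = μ ∧ π.map Prod.snd = ν),
    (∫⁻ x, (‖x.1 - x.2‖₊ : ℝ≥0∞) ^ (2 : ℝ) ∂π) ^ ((1 : ℝ) / 2)

/-- Second moment norm `M₂(μ) = (∫ ‖y‖² dμ)^{1/2}`. -/
noncomputable def M2 (μ : MeasureTheory.Measure (EuclideanSpace ℝ (Fin 2))) : ℝ :=
  (∫ y, ‖y‖ ^ 2 ∂μ) ^ ((1 : ℝ) / 2)

/-- Covariance functional `S(G) = ∫ y₁y₂ dG - (∫ y₁ dG)(∫ y₂ dG)`. -/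
noncomputable def covFun (G : MeasureTheory.Measure (EuclideanSpace ℝ (Fin 2))) : ℝ :=
  (∫ y, y 0 * y 1 ∂G) - (∫ y, y 0 ∂G) * (∫ y, y 1 ∂G)

open ProbabilityTheory

section Moments

variable {Ω : Type*} [MeasurableSpace Ω] {μ : Measure Ω}

lemma abs_integral_mul_le_sqrt_mul_sqrt {f g : Ω → ℝ} (hf : MemLp f 2 μ) (hg : MemLp g 2 μ) :
    |∫ ω, f ω * g ω ∂μ| ≤ √(∫ ω, f ω ^ 2 ∂μ) * √(∫ ω, g ω ^ 2 ∂μ) := by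
  have hf' : MemLp (fun ω ↦ |f ω|) (ENNReal.ofReal 2) μ := by
    rw [ENNReal.ofReal_ofNat]; exact hf.abs
  have hg' : MemLp (fun ω ↦ |g ω|) (ENNReal.ofReal 2) μ := by
    rw [ENNReal.ofReal_ofNat]; exact hg.abs
  calc |∫ ω, f ω * g ω ∂μ| ≤ ∫ ω, |f ω| * |g ω| ∂μ := by
        simpa only [abs_mul] using abs_integral_le_integral_abs (f := fun ω ↦ f ω * g ω)
    _ ≤ (∫ ω, |f ω| ^ (2 : ℝ) ∂μ) ^ (1 / (2 : ℝ)) * (∫ ω, |g ω| ^ (2 : ℝ) ∂μ) ^ (1 / (2 : ℝ)) :=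
        integral_mul_le_Lp_mul_Lq_of_nonneg Real.HolderConjugate.two_two
          (ae_of_all _ fun _ ↦ abs_nonneg _) (ae_of_all _ fun _ ↦ abs_nonneg _) hf' hg'
    _ = √(∫ ω, f ω ^ 2 ∂μ) * √(∫ ω, g ω ^ 2 ∂μ) := by
        simp only [Real.rpow_two, sq_abs, Real.sqrt_eq_rpow]

lemma abs_covariance_le_sqrt_variance_mul_sqrt_variance [IsProbabilityMeasure μ] {X Y : Ω → ℝ}
    (hX : MemLp X 2 μ) (hY : MemLp Y 2 μ) :
    |cov[X, Y; μ]| ≤ √(Var[X; μ]) * √(Var[Y; μ]) := by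
  rw [covariance, variance_eq_integral hX.aemeasurable, variance_eq_integral hY.aemeasurable]
  exact abs_integral_mul_le_sqrt_mul_sqrt (hX.sub (memLp_const _)) (hY.sub (memLp_const _))

lemma abs_covariance_le_sqrt_mul_sqrt [IsProbabilityMeasure μ] {X Y : Ω → ℝ}
    (hX : MemLp X 2 μ) (hY : MemLp Y 2 μ) :
    |cov[X, Y; μ]| ≤ √(∫ ω, X ω ^ 2 ∂μ) * √(∫ ω, Y ω ^ 2 ∂μ) :=
  (abs_covariance_le_sqrt_variance_mul_sqrt_variance hX hY).trans <|
    mul_le_mul (Real.sqrt_le_sqrt (variance_le_expectation_sq hX.1))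
      (Real.sqrt_le_sqrt (variance_le_expectation_sq hY.1)) (Real.sqrt_nonneg _)
      (Real.sqrt_nonneg _)

variable {ι : Type*} [Fintype ι]

lemma MeasureTheory.MemLp.euclideanSpace_apply {p : ℝ≥0∞} {Z : Ω → EuclideanSpace ℝ ι}
    (hZ : MemLp Z p μ) (i : ι) : MemLp (fun ω ↦ Z ω i) p μ :=
  (EuclideanSpace.proj (𝕜 := ℝ) i).comp_memLp' hZ

lemma integral_sq_apply_le_integral_norm_sq {Z : Ω → EuclideanSpace ℝ ι} (hZ : MemLp Z 2 μ)
    (i : ι) : ∫ ω, Z ω i ^ 2 ∂μ ≤ ∫ ω, ‖Z ω‖ ^ 2 ∂μ :=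
  integral_mono (hZ.euclideanSpace_apply i).integrable_sq hZ.norm.integrable_sq fun ω ↦ by
    simpa only [Real.norm_eq_abs, sq_abs] using
      pow_le_pow_left₀ (norm_nonneg _) (PiLp.norm_apply_le (Z ω) i) 2

lemma abs_covariance_apply_le [IsProbabilityMeasure μ] {U V : Ω → EuclideanSpace ℝ ι}
    (hU : MemLp U 2 μ) (hV : MemLp V 2 μ) (i j : ι) :
    |cov[fun ω ↦ U ω i, fun ω ↦ V ω j; μ]| ≤ √(∫ ω, ‖U ω‖ ^ 2 ∂μ) * √(∫ ω, ‖V ω‖ ^ 2 ∂μ) :=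
  (abs_covariance_le_sqrt_mul_sqrt (hU.euclideanSpace_apply i) (hV.euclideanSpace_apply j)).trans <|
    mul_le_mul (Real.sqrt_le_sqrt (integral_sq_apply_le_integral_norm_sq hU i))
      (Real.sqrt_le_sqrt (integral_sq_apply_le_integral_norm_sq hV j)) (Real.sqrt_nonneg _)
      (Real.sqrt_nonneg _)

lemma lintegral_nnnorm_rpow_two_rpow_half_eq_ofReal_sqrt {F : Type*} [NormedAddCommGroup F]
    {f : Ω → F} (hf : MemLp f 2 μ) :
    (∫⁻ ω, (‖f ω‖₊ : ℝ≥0∞) ^ (2 : ℝ) ∂μ) ^ ((1 : ℝ) / 2)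
      = ENNReal.ofReal √(∫ ω, ‖f ω‖ ^ 2 ∂μ) := by
  have h := hf.eLpNorm_eq_integral_rpow_norm two_ne_zero ENNReal.ofNat_ne_top
  rw [eLpNorm_eq_lintegral_rpow_enorm_toReal two_ne_zero ENNReal.ofNat_ne_top] at h
  simpa [enorm_eq_nnnorm, Real.rpow_two, Real.sqrt_eq_rpow] using h

end Moments

section Coupling

variable {α β : Type*} [MeasurableSpace α] [MeasurableSpace β]

def IsCoupling (μ : Measure α) (ν : Measure β) (π : Measure (α × β)) : Prop :=
  π.map Prod.fst = μ ∧ π.map Prod.snd = ν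

lemma isCoupling_prod (μ : Measure α) (ν : Measure β) [IsProbabilityMeasure μ]
    [IsProbabilityMeasure ν] : IsCoupling μ ν (μ.prod ν) := by
  simp [IsCoupling]

lemma IsCoupling.isProbabilityMeasure {μ : Measure α} {ν : Measure β} {π : Measure (α × β)}
    [IsProbabilityMeasure μ] (hπ : IsCoupling μ ν π) : IsProbabilityMeasure π := by
  rw [← Measure.isProbabilityMeasure_map_iff measurable_fst.aemeasurable, hπ.1]
  infer_instance

end Coupling

local notation "ℝ²" => EuclideanSpace ℝ (Fin 2)

section CovFun

variable {Ω : Type*} [MeasurableSpace Ω] {P : Measure Ω}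

lemma covFun_eq_covariance {μ : Measure ℝ²} [IsProbabilityMeasure μ] (hμ : MemLp id 2 μ) :
    covFun μ = cov[fun y ↦ y 0, fun y ↦ y 1; μ] :=
  (covariance_eq_sub (hμ.euclideanSpace_apply 0) (hμ.euclideanSpace_apply 1)).symm

lemma covFun_map [IsProbabilityMeasure P] {X : Ω → ℝ²} (hX : MemLp X 2 P) :
    covFun (P.map X) = cov[fun ω ↦ X ω 0, fun ω ↦ X ω 1; P] := by
  have hXm : AEMeasurable X P := hX.aemeasurable
  have : IsProbabilityMeasure (P.map X) := Measure.isProbabilityMeasure_map hXm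
  rw [covFun_eq_covariance ((memLp_map_measure_iff aestronglyMeasurable_id hXm).2 hX),
    covariance_map (by fun_prop) (by fun_prop) hXm]
  rfl

lemma M2_map {X : Ω → ℝ²} (hX : AEMeasurable X P) :
    M2 (P.map X) = √(∫ ω, ‖X ω‖ ^ 2 ∂P) := by
  rw [M2, integral_map hX (by fun_prop), Real.sqrt_eq_rpow]

lemma abs_covFun_map_sub_le [IsProbabilityMeasure P] {X Y : Ω → ℝ²} (hX : MemLp X 2 P)
    (hY : MemLp Y 2 P) :
    |covFun (P.map X) - covFun (P.map Y)|
      ≤ (M2 (P.map X) + M2 (P.map Y)) * √(∫ ω, ‖X ω - Y ω‖ ^ 2 ∂P) := by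
  have hXY : MemLp (X - Y) 2 P := hX.sub hY
  have hsplit : covFun (P.map X) - covFun (P.map Y)
      = cov[fun ω ↦ X ω 0, fun ω ↦ (X - Y) ω 1; P]
        + cov[fun ω ↦ (X - Y) ω 0, fun ω ↦ Y ω 1; P] := by
    simp only [Pi.sub_apply, PiLp.sub_apply]
    rw [covFun_map hX, covFun_map hY,
      covariance_fun_sub_right (hX.euclideanSpace_apply 0) (hX.euclideanSpace_apply 1)
        (hY.euclideanSpace_apply 1),
      covariance_fun_sub_left (hX.euclideanSpace_apply 0) (hY.euclideanSpace_apply 0)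
        (hY.euclideanSpace_apply 1)]
    ring
  rw [hsplit, M2_map hX.aemeasurable, M2_map hY.aemeasurable]
  calc _ ≤ _ + _ := abs_add_le _ _
    _ ≤ √(∫ ω, ‖X ω‖ ^ 2 ∂P) * √(∫ ω, ‖(X - Y) ω‖ ^ 2 ∂P)
          + √(∫ ω, ‖(X - Y) ω‖ ^ 2 ∂P) * √(∫ ω, ‖Y ω‖ ^ 2 ∂P) :=
        add_le_add (abs_covariance_apply_le hX hXY 0 1) (abs_covariance_apply_le hXY hY 0 1)
    _ = _ := by simp only [Pi.sub_apply]; ring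

end CovFun

lemma ofReal_abs_covFun_sub_le_of_isCoupling {G H : Measure ℝ²} [IsProbabilityMeasure G]
    (hG : MemLp id 2 G) (hH : MemLp id 2 H) {π : Measure (ℝ² × ℝ²)} (hπ : IsCoupling G H π) :
    ENNReal.ofReal |covFun G - covFun H|
      ≤ ENNReal.ofReal (M2 G + M2 H)
        * (∫⁻ x, (‖x.1 - x.2‖₊ : ℝ≥0∞) ^ (2 : ℝ) ∂π) ^ ((1 : ℝ) / 2) := by
  have : IsProbabilityMeasure π := hπ.isProbabilityMeasure
  obtain ⟨rfl, rfl⟩ := hπ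
  have hX : MemLp Prod.fst 2 π :=
    (memLp_map_measure_iff aestronglyMeasurable_id measurable_fst.aemeasurable).1 hG
  have hY : MemLp Prod.snd 2 π :=
    (memLp_map_measure_iff aestronglyMeasurable_id measurable_snd.aemeasurable).1 hH
  have hXY : MemLp (fun x : ℝ² × ℝ² ↦ x.1 - x.2) 2 π := hX.sub hY
  rw [lintegral_nnnorm_rpow_two_rpow_half_eq_ofReal_sqrt hXY,
    ← ENNReal.ofReal_mul' (Real.sqrt_nonneg _)]
  exact ENNReal.ofReal_le_ofReal (abs_covFun_map_sub_le hX hY)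

/-- Local Lipschitz bound for the covariance functional in Wasserstein-2 distance:
`|S(G) - S(H)| ≤ (M₂(G) + M₂(H)) · W₂(G,H)`. -/
theorem covariance_local_lipschitz_W2
    (G H : MeasureTheory.Measure (EuclideanSpace ℝ (Fin 2)))
    [IsProbabilityMeasure G] [IsProbabilityMeasure H]
    (hG : MeasureTheory.MemLp id 2 G) (hH : MeasureTheory.MemLp id 2 H) :
    ENNReal.ofReal |covFun G - covFun H|
      ≤ ENNReal.ofReal (M2 G + M2 H) * W2 G H := by
  rw [W2, iInf_subtype']
  -- `ENNReal.mul_iInf` fails over an empty index when the factor is `0`: `0 * ⊤ = 0 ≠ ⊤`.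
  have : Nonempty {π : Measure (ℝ² × ℝ²) // π.map Prod.fst = G ∧ π.map Prod.snd = H} :=
    ⟨⟨G.prod H, isCoupling_prod G H⟩⟩
  rw [ENNReal.mul_iInf (by simp)]
  exact le_iInf fun π ↦ ofReal_abs_covFun_sub_le_of_isCoupling hG hH π.2
end

section
/- Let Z1, ..., Zn be independent real random variables with common distribution function F satisfying ∫_ℝ √(F(z)(1-F(z))) dz < ∞, and w1,...,wn nonnegative constants summing to 1. Then the weighted empirical distribution F_n = Σ w_i δ_{Z_i} satisfies E[W1(F_n, F)] ≤ (Σ_{i=1}^n w_i²)^{1/2} · ∫_ℝ √(F(z)(1-F(z))) dz. -/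
open MeasureTheory ProbabilityTheory
open scoped ENNReal

/-!
By Tonelli, the expectation and the `dz`-integral may be exchanged. For fixed `z`,
`F_n(z) = Σ wᵢ 1{Zᵢ ≤ z}` is a weighted sum of independent Bernoulli(`F(z)`) variables, with
mean `F(z)` (as `Σ wᵢ = 1`) and variance `(Σ wᵢ²) F(z)(1 - F(z))`; since the `L¹` norm is at most
the `L²` norm under a probability measure, `E|F_n(z) - F(z)|` is at most the standard deviation.
Integrating this bound over `z` gives the claim.
-/

namespace ProbabilityTheory

section Moments

variable {Ω : Type*} [MeasurableSpace Ω] {P : Measure Ω}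

lemma lintegral_enorm_sub_integral_le_sqrt_variance [IsProbabilityMeasure P] {X : Ω → ℝ}
    (hX : MemLp X 2 P) : ∫⁻ ω, ‖X ω - P[X]‖ₑ ∂P ≤ ENNReal.ofReal √Var[X; P] := by
  have hY : AEStronglyMeasurable (fun ω ↦ X ω - P[X]) P :=
    hX.aestronglyMeasurable.sub aestronglyMeasurable_const
  calc ∫⁻ ω, ‖X ω - P[X]‖ₑ ∂P = eLpNorm (fun ω ↦ X ω - P[X]) 1 P :=
        eLpNorm_one_eq_lintegral_enorm.symm
    _ ≤ eLpNorm (fun ω ↦ X ω - P[X]) 2 P := eLpNorm_le_eLpNorm_of_exponent_le one_le_two hY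
    _ = evariance X P ^ (1 / 2 : ℝ) := by
        simp [eLpNorm_eq_lintegral_rpow_enorm_toReal two_ne_zero ENNReal.ofNat_ne_top, evariance]
    _ = ENNReal.ofReal √Var[X; P] := by
        rw [← hX.ofReal_variance_eq, ENNReal.ofReal_rpow_of_nonneg (variance_nonneg _ _)
          (by norm_num), Real.sqrt_eq_rpow]

lemma variance_indicator_one [IsProbabilityMeasure P] {s : Set Ω} (hs : MeasurableSet s) :
    Var[s.indicator 1; P] = P.real s * (1 - P.real s) := by
  have hX : MemLp (s.indicator (1 : Ω → ℝ)) 2 P := memLp_indicator_const 2 hs 1 (by simp)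
  have hsq : s.indicator (1 : Ω → ℝ) ^ 2 = s.indicator 1 := by
    ext ω; by_cases h : ω ∈ s <;> simp [h]
  rw [variance_eq_sub hX, hsq, integral_indicator_one hs]
  ring

end Moments

section WeightedSum

variable {Ω β ι : Type*} [MeasurableSpace Ω] [MeasurableSpace β]
  {P : Measure Ω} {μ : Measure β} {Z : ι → Ω → β} {f : β → ℝ}

lemma integral_sum_mul_comp_of_map_eq [Fintype ι] (hZ : ∀ i, Measurable (Z i))
    (hid : ∀ i, P.map (Z i) = μ) (hf : Integrable f μ) (w : ι → ℝ) :
    P[fun ω ↦ ∑ i, w i * f (Z i ω)] = (∑ i, w i) * μ[f] := by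
  have hcomp : ∀ i, P[fun ω ↦ f (Z i ω)] = μ[f] := fun i ↦ by
    rw [← integral_map (hZ i).aemeasurable (hid i ▸ hf.aestronglyMeasurable), hid i]
  have hint : ∀ i ∈ Finset.univ, Integrable (fun ω ↦ w i * f (Z i ω)) P := fun i _ ↦
    ((hid i ▸ hf).comp_measurable (hZ i)).const_mul (w i)
  simp only [integral_finsetSum _ hint, integral_const_mul, hcomp, Finset.sum_mul]

lemma variance_sum_mul_comp_of_iIndepFun [Fintype ι] (hZ : ∀ i, Measurable (Z i))
    (hindep : iIndepFun Z P) (hid : ∀ i, P.map (Z i) = μ) (hf : MemLp f 2 μ)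
    (hfm : Measurable f) (w : ι → ℝ) :
    Var[fun ω ↦ ∑ i, w i * f (Z i ω); P] = (∑ i, w i ^ 2) * Var[f; μ] := by
  have hpair : Set.Pairwise ↑(Finset.univ : Finset ι)
      fun i j ↦ (fun ω ↦ w i * f (Z i ω)) ⟂ᵢ[P] fun ω ↦ w j * f (Z j ω) :=
    fun i _ j _ hij ↦ (hindep.indepFun hij).comp (hfm.const_mul (w i)) (hfm.const_mul (w j))
  have hvar : ∀ i, Var[fun ω ↦ f (Z i ω); P] = Var[f; μ] := fun i ↦
    MeasurePreserving.variance_fun_comp ⟨hZ i, hid i⟩ hfm.aemeasurable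
  have hsum := IndepFun.variance_sum (X := fun i ω ↦ w i * f (Z i ω))
    (fun i _ ↦ (hf.comp_measurePreserving ⟨hZ i, hid i⟩).const_mul (w i)) hpair
  simp only [Finset.sum_fn] at hsum
  simp only [hsum, variance_const_mul, hvar, Finset.sum_mul]

end WeightedSum

end ProbabilityTheory

section WeightedEmpirical

variable {Ω ι : Type*} [MeasurableSpace Ω] [Fintype ι] {P : Measure Ω} [IsProbabilityMeasure P]
  {μ : Measure ℝ} [IsProbabilityMeasure μ] {Z : ι → Ω → ℝ}

lemma lintegral_enorm_weighted_empirical_cdf_sub_cdf_le (hZ : ∀ i, Measurable (Z i))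
    (hindep : iIndepFun Z P) (hid : ∀ i, P.map (Z i) = μ) {w : ι → ℝ} (hw1 : ∑ i, w i = 1)
    (z : ℝ) :
    ∫⁻ ω, ‖(∑ i, w i * (if Z i ω ≤ z then (1 : ℝ) else 0)) - cdf μ z‖ₑ ∂P
      ≤ ENNReal.ofReal (√(∑ i, w i ^ 2) * √(cdf μ z * (1 - cdf μ z))) := by
  set f : ℝ → ℝ := (Set.Iic z).indicator 1
  have hf_apply : ∀ x, (if x ≤ z then (1 : ℝ) else 0) = f x := fun x ↦ by
    simp [f, Set.indicator_apply]
  have hf : MemLp f 2 μ := memLp_indicator_const 2 measurableSet_Iic 1 (by simp)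
  have hmean : P[fun ω ↦ ∑ i, w i * f (Z i ω)] = cdf μ z := by
    rw [integral_sum_mul_comp_of_map_eq hZ hid (hf.integrable one_le_two), hw1, one_mul,
      integral_indicator_one measurableSet_Iic, cdf_eq_real]
  have hvar : Var[fun ω ↦ ∑ i, w i * f (Z i ω); P]
      = (∑ i, w i ^ 2) * (cdf μ z * (1 - cdf μ z)) := by
    rw [variance_sum_mul_comp_of_iIndepFun hZ hindep hid hf (measurable_one.indicator
      measurableSet_Iic), variance_indicator_one measurableSet_Iic, cdf_eq_real]
  simp only [hf_apply]
  calc ∫⁻ ω, ‖(∑ i, w i * f (Z i ω)) - cdf μ z‖ₑ ∂P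
      = ∫⁻ ω, ‖(∑ i, w i * f (Z i ω)) - P[fun ω ↦ ∑ i, w i * f (Z i ω)]‖ₑ ∂P := by rw [hmean]
    _ ≤ ENNReal.ofReal √Var[fun ω ↦ ∑ i, w i * f (Z i ω); P] :=
        lintegral_enorm_sub_integral_le_sqrt_variance
          (memLp_finsetSum _ fun i _ ↦ (hf.comp_measurePreserving ⟨hZ i, hid i⟩).const_mul (w i))
    _ = ENNReal.ofReal (√(∑ i, w i ^ 2) * √(cdf μ z * (1 - cdf μ z))) := by
        rw [hvar, Real.sqrt_mul (Finset.sum_nonneg fun i _ ↦ sq_nonneg (w i))]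

end WeightedEmpirical

theorem expected_W1_weighted_empirical_le_general
    {Ω : Type*} [MeasurableSpace Ω] (P : MeasureTheory.Measure Ω)
    [IsProbabilityMeasure P]
    {n : ℕ} (Z : Fin n → Ω → ℝ) (hZmeas : ∀ i, Measurable (Z i))
    (hindep : ProbabilityTheory.iIndepFun Z P)
    (μ : MeasureTheory.Measure ℝ) [IsProbabilityMeasure μ]
    (hid : ∀ i, P.map (Z i) = μ)
    (hJ : MeasureTheory.Integrable (fun z => Real.sqrt (cdf μ z * (1 - cdf μ z))))
    (w : Fin n → ℝ) (hw1 : ∑ i, w i = 1) :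
    (∫⁻ ω, (∫⁻ z,
        (‖(∑ i, w i * (if Z i ω ≤ z then (1 : ℝ) else 0)) - cdf μ z‖₊ : ℝ≥0∞)) ∂P)
      ≤ ENNReal.ofReal (Real.sqrt (∑ i, (w i) ^ 2)
          * ∫ z, Real.sqrt (cdf μ z * (1 - cdf μ z))) := by
  have hmeas : Measurable fun q : Ω × ℝ ↦
      ‖(∑ i, w i * (if Z i q.1 ≤ q.2 then (1 : ℝ) else 0)) - cdf μ q.2‖ₑ := by
    refine (Measurable.sub ?_ ((cdf μ).mono.measurable.comp measurable_snd)).enorm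
    refine Finset.measurable_sum _ fun i _ ↦ measurable_const.mul ?_
    exact Measurable.ite (measurableSet_le ((hZmeas i).comp measurable_fst) measurable_snd)
      measurable_const measurable_const
  rw [lintegral_lintegral_swap hmeas.aemeasurable]
  calc _ ≤ ∫⁻ z, ENNReal.ofReal (√(∑ i, w i ^ 2) * √(cdf μ z * (1 - cdf μ z))) :=
        lintegral_mono fun z ↦
          lintegral_enorm_weighted_empirical_cdf_sub_cdf_le hZmeas hindep hid hw1 z
    _ = _ := by
        rw [← integral_const_mul, ofReal_integral_eq_lintegral_ofReal (hJ.const_mul _)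
          (ae_of_all _ fun z ↦ by positivity)]

/-- For independent random variables `Z₁,…,Zₙ` with common cdf `F` satisfying
`∫ √(F(1-F)) < ∞` and probability weights `wᵢ`, the weighted empirical distribution
`F_n(z) = Σ wᵢ 1_{Zᵢ ≤ z}` satisfies
`E[W₁(F_n, F)] = E ∫ |F_n(z) - F(z)| dz ≤ (Σ wᵢ²)^{1/2} ∫ √(F(z)(1-F(z))) dz`. -/
theorem expected_W1_weighted_empirical_le
    {Ω : Type*} [MeasurableSpace Ω] (P : MeasureTheory.Measure Ω)
    [IsProbabilityMeasure P]
    {n : ℕ} (Z : Fin n → Ω → ℝ) (hZmeas : ∀ i, Measurable (Z i))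
    (hindep : ProbabilityTheory.iIndepFun Z P)
    (μ : MeasureTheory.Measure ℝ) [IsProbabilityMeasure μ]
    (hid : ∀ i, P.map (Z i) = μ)
    (hJ : MeasureTheory.Integrable (fun z => Real.sqrt (cdf μ z * (1 - cdf μ z))))
    (w : Fin n → ℝ) (hw0 : ∀ i, 0 ≤ w i) (hw1 : ∑ i, w i = 1) :
    (∫⁻ ω, (∫⁻ z,
        (‖(∑ i, w i * (if Z i ω ≤ z then (1 : ℝ) else 0)) - cdf μ z‖₊ : ℝ≥0∞)) ∂P)
      ≤ ENNReal.ofReal (Real.sqrt (∑ i, (w i) ^ 2)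
          * ∫ z, Real.sqrt (cdf μ z * (1 - cdf μ z))) :=
  expected_W1_weighted_empirical_le_general P Z hZmeas hindep μ hid hJ w hw1
end

section
/- Let μ, ν be probability measures on ℝ^d with finite p-th moments, and for u, v ∈ S^{d-1} let μ∘u∗⁻¹ denote the pushforward of μ by x ↦ u·x. Then |W_p(μ∘u∗⁻¹, ν∘u∗⁻¹) - W_p(μ∘v∗⁻¹, ν∘v∗⁻¹)| ≤ (M_p(μ) + M_p(ν)) ‖u - v‖, i.e. the projected Wasserstein distance is Lipschitz in the direction. -/
/-!
Projecting a single measure `μ` along `u` and along `v` couples `μ∘u⁻¹` with `μ∘v⁻¹`, and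
`|u·x - v·x| ≤ ‖u - v‖ ‖x‖` bounds the cost of this coupling by `‖u - v‖ M_p(μ)`. The claim then
follows from the triangle inequality for `W_p`, which comes from gluing two couplings along a
disintegration of one of them and Minkowski's inequality.
-/

open MeasureTheory
open scoped ENNReal NNReal RealInnerProductSpace

/-- The Wasserstein distance of order `p` on ℝ. -/
noncomputable def Wp (p : ℝ) (μ ν : MeasureTheory.Measure ℝ) : ℝ≥0∞ :=
  ⨅ (π : MeasureTheory.Measure (ℝ × ℝ))
    (_ : π.map Prod.fst = μ ∧ π.map Prod.snd = ν),
    (∫⁻ x, (‖x.1 - x.2‖₊ : ℝ≥0∞) ^ p ∂π) ^ (1 / p)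

/-- `p`-th moment norm (in `ℝ≥0∞`). -/
noncomputable def Mp (p : ℝ) {d : ℕ}
    (μ : MeasureTheory.Measure (EuclideanSpace ℝ (Fin d))) : ℝ≥0∞ :=
  (∫⁻ y, (‖y‖₊ : ℝ≥0∞) ^ p ∂μ) ^ (1 / p)

open ProbabilityTheory

namespace MeasureTheory.Measure

variable {α β γ : Type*} [MeasurableSpace α] [MeasurableSpace β] [MeasurableSpace γ]

lemma map_prodMap_compProd_comap (μ : Measure α) [SFinite μ] (κ : Kernel β γ)
    [IsSFiniteKernel κ] {f : α → β} (hf : Measurable f) :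
    (μ ⊗ₘ κ.comap f hf).map (Prod.map f id) = μ.map f ⊗ₘ κ := by
  ext s hs
  rw [map_apply (by fun_prop) hs, compProd_apply (by measurability), compProd_apply hs,
    lintegral_map (Kernel.measurable_kernel_prodMk_left hs) hf]
  rfl

lemma exists_gluing [StandardBorelSpace γ] [Nonempty γ]
    (π₁ : Measure (α × β)) (π₂ : Measure (β × γ)) [SFinite π₁] [IsFiniteMeasure π₂]
    (h : π₁.snd = π₂.fst) :
    ∃ ρ : Measure ((α × β) × γ), ρ.map Prod.fst = π₁ ∧ ρ.map (Prod.map Prod.snd id) = π₂ := by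
  refine ⟨π₁ ⊗ₘ π₂.condKernel.comap Prod.snd measurable_snd, fst_compProd _ _, ?_⟩
  rw [map_prodMap_compProd_comap, ← snd, h, disintegrate]

end MeasureTheory.Measure

section Wasserstein

variable {p : ℝ}

lemma Wp_eq_iInf_eLpNorm (hp : 0 < p) (μ ν : Measure ℝ) :
    Wp p μ ν = ⨅ (π : Measure (ℝ × ℝ)) (_ : π.map Prod.fst = μ ∧ π.map Prod.snd = ν),
      eLpNorm (fun x => x.1 - x.2) (ENNReal.ofReal p) π := by
  simp only [Wp, eLpNorm_eq_lintegral_rpow_enorm_toReal (ENNReal.ofReal_pos.2 hp).ne'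
    ENNReal.ofReal_ne_top, ENNReal.toReal_ofReal hp.le, enorm_eq_nnnorm]

lemma Wp_le_eLpNorm (hp : 0 < p) {μ ν : Measure ℝ} (π : Measure (ℝ × ℝ))
    (h₁ : π.map Prod.fst = μ) (h₂ : π.map Prod.snd = ν) :
    Wp p μ ν ≤ eLpNorm (fun x => x.1 - x.2) (ENNReal.ofReal p) π := by
  rw [Wp_eq_iInf_eLpNorm hp]
  exact iInf₂_le π ⟨h₁, h₂⟩

lemma Wp_map_le_eLpNorm_sub (hp : 0 < p) {X : Type*} [MeasurableSpace X] (μ : Measure X)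
    {f g : X → ℝ} (hf : Measurable f) (hg : Measurable g) :
    Wp p (μ.map f) (μ.map g) ≤ eLpNorm (fun x => f x - g x) (ENNReal.ofReal p) μ := by
  have hfg : Measurable fun x => (f x, g x) := hf.prodMk hg
  calc Wp p (μ.map f) (μ.map g)
      ≤ eLpNorm (fun x => x.1 - x.2) (ENNReal.ofReal p) (μ.map fun x => (f x, g x)) :=
        Wp_le_eLpNorm hp _ (by rw [Measure.map_map measurable_fst hfg]; rfl)
          (by rw [Measure.map_map measurable_snd hfg]; rfl)
    _ = eLpNorm (fun x => f x - g x) (ENNReal.ofReal p) μ :=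
        eLpNorm_map_measure (by fun_prop) hfg.aemeasurable

lemma Wp_triangle (hp : 1 ≤ p) (α β γ : Measure ℝ) [IsFiniteMeasure β] :
    Wp p α γ ≤ Wp p α β + Wp p β γ := by
  have hp0 : 0 < p := zero_lt_one.trans_le hp
  rw [Wp_eq_iInf_eLpNorm hp0 α β, Wp_eq_iInf_eLpNorm hp0 β γ]
  refine ENNReal.le_iInf_add_iInf fun π₁ π₂ => ENNReal.le_iInf_add_iInf fun h₁ h₂ => ?_
  have : IsFiniteMeasure (π₁.map Prod.snd) := h₁.2 ▸ ‹_›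
  have : IsFiniteMeasure (π₂.map Prod.fst) := h₂.1 ▸ ‹_›
  have := Measure.isFiniteMeasure_of_map (μ := π₁) measurable_snd.aemeasurable
  have := Measure.isFiniteMeasure_of_map (μ := π₂) measurable_fst.aemeasurable
  obtain ⟨ρ, hρ₁, hρ₂⟩ := Measure.exists_gluing π₁ π₂ (h₁.2.trans h₂.1.symm)
  have hρα : ρ.map (fun q => q.1.1) = α := by
    rw [← h₁.1, ← hρ₁, Measure.map_map measurable_fst measurable_fst]; rfl
  have hργ : ρ.map (fun q => q.2) = γ := by
    rw [← h₂.2, ← hρ₂, Measure.map_map measurable_snd (by fun_prop)]; rfl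
  have hsplit : (fun q : (ℝ × ℝ) × ℝ => q.1.1 - q.2)
      = (fun q => q.1.1 - q.1.2) + fun q => q.1.2 - q.2 := by
    funext q
    simp only [Pi.add_apply, sub_add_sub_cancel]
  calc Wp p α γ = Wp p (ρ.map fun q => q.1.1) (ρ.map fun q => q.2) := by rw [hρα, hργ]
    _ ≤ eLpNorm (fun q : (ℝ × ℝ) × ℝ => q.1.1 - q.2) (ENNReal.ofReal p) ρ :=
        Wp_map_le_eLpNorm_sub hp0 ρ (by fun_prop) (by fun_prop)
    _ ≤ eLpNorm (fun q : (ℝ × ℝ) × ℝ => q.1.1 - q.1.2) (ENNReal.ofReal p) ρ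
        + eLpNorm (fun q : (ℝ × ℝ) × ℝ => q.1.2 - q.2) (ENNReal.ofReal p) ρ := by
        rw [hsplit]
        exact eLpNorm_add_le (by fun_prop) (by fun_prop) (ENNReal.one_le_ofReal.2 hp)
    _ = eLpNorm (fun x => x.1 - x.2) (ENNReal.ofReal p) π₁
        + eLpNorm (fun x => x.1 - x.2) (ENNReal.ofReal p) π₂ := by
        rw [← hρ₁, ← hρ₂, eLpNorm_map_measure (by fun_prop) (by fun_prop),
          eLpNorm_map_measure (by fun_prop) (by fun_prop)]
        rfl

variable {d : ℕ}

lemma Mp_eq_eLpNorm (hp : 0 < p) (μ : Measure (EuclideanSpace ℝ (Fin d))) :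
    Mp p μ = eLpNorm id (ENNReal.ofReal p) μ := by
  simp only [Mp, eLpNorm_eq_lintegral_rpow_enorm_toReal (ENNReal.ofReal_pos.2 hp).ne'
    ENNReal.ofReal_ne_top, ENNReal.toReal_ofReal hp.le, enorm_eq_nnnorm, id]

lemma Wp_map_inner_le (hp : 0 < p) (μ : Measure (EuclideanSpace ℝ (Fin d)))
    (u v : EuclideanSpace ℝ (Fin d)) :
    Wp p (μ.map fun x => ⟪u, x⟫) (μ.map fun x => ⟪v, x⟫) ≤ ENNReal.ofReal ‖u - v‖ * Mp p μ := by
  rw [Mp_eq_eLpNorm hp]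
  calc Wp p (μ.map fun x => ⟪u, x⟫) (μ.map fun x => ⟪v, x⟫)
      ≤ eLpNorm (fun x => ⟪u, x⟫ - ⟪v, x⟫) (ENNReal.ofReal p) μ :=
        Wp_map_le_eLpNorm_sub hp μ (by fun_prop) (by fun_prop)
    _ ≤ ENNReal.ofReal ‖u - v‖ * eLpNorm id (ENNReal.ofReal p) μ := by
        refine eLpNorm_le_mul_eLpNorm_of_ae_le_mul (ae_of_all _ fun x => ?_) _
        rw [← inner_sub_left]
        exact norm_inner_le_norm _ _

lemma Wp_map_inner_le_add (hp : 1 ≤ p) (μ ν : Measure (EuclideanSpace ℝ (Fin d)))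
    [IsFiniteMeasure μ] [IsFiniteMeasure ν] (u v : EuclideanSpace ℝ (Fin d)) :
    Wp p (μ.map fun x => ⟪u, x⟫) (ν.map fun x => ⟪u, x⟫)
      ≤ Wp p (μ.map fun x => ⟪v, x⟫) (ν.map fun x => ⟪v, x⟫)
        + (Mp p μ + Mp p ν) * ENNReal.ofReal ‖u - v‖ := by
  have hp0 : 0 < p := zero_lt_one.trans_le hp
  calc Wp p (μ.map fun x => ⟪u, x⟫) (ν.map fun x => ⟪u, x⟫)
      ≤ Wp p (μ.map fun x => ⟪u, x⟫) (μ.map fun x => ⟪v, x⟫)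
        + (Wp p (μ.map fun x => ⟪v, x⟫) (ν.map fun x => ⟪v, x⟫)
          + Wp p (ν.map fun x => ⟪v, x⟫) (ν.map fun x => ⟪u, x⟫)) :=
        (Wp_triangle hp _ _ _).trans (add_le_add le_rfl (Wp_triangle hp _ _ _))
    _ ≤ ENNReal.ofReal ‖u - v‖ * Mp p μ
        + (Wp p (μ.map fun x => ⟪v, x⟫) (ν.map fun x => ⟪v, x⟫)
          + ENNReal.ofReal ‖v - u‖ * Mp p ν) := by
        gcongr <;> exact Wp_map_inner_le hp0 _ _ _
    _ = Wp p (μ.map fun x => ⟪v, x⟫) (ν.map fun x => ⟪v, x⟫)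
        + (Mp p μ + Mp p ν) * ENNReal.ofReal ‖u - v‖ := by
        rw [norm_sub_rev v u]
        ring

end Wasserstein

theorem projected_wasserstein_lipschitz_in_direction_general
    (p : ℝ) (hp : 1 ≤ p) {d : ℕ}
    (μ ν : MeasureTheory.Measure (EuclideanSpace ℝ (Fin d)))
    [IsProbabilityMeasure μ] [IsProbabilityMeasure ν]
    (u v : EuclideanSpace ℝ (Fin d)) :
    Wp p (μ.map (fun x => ⟪u, x⟫)) (ν.map (fun x => ⟪u, x⟫))
        ≤ Wp p (μ.map (fun x => ⟪v, x⟫)) (ν.map (fun x => ⟪v, x⟫))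
          + (Mp p μ + Mp p ν) * ENNReal.ofReal ‖u - v‖
    ∧ Wp p (μ.map (fun x => ⟪v, x⟫)) (ν.map (fun x => ⟪v, x⟫))
        ≤ Wp p (μ.map (fun x => ⟪u, x⟫)) (ν.map (fun x => ⟪u, x⟫))
          + (Mp p μ + Mp p ν) * ENNReal.ofReal ‖u - v‖ :=
  ⟨Wp_map_inner_le_add hp μ ν u v, norm_sub_rev v u ▸ Wp_map_inner_le_add hp μ ν v u⟩

/-- The Wasserstein distance between one-dimensional projections is Lipschitz in the
direction: `|W_p(μ∘u⁻¹, ν∘u⁻¹) - W_p(μ∘v⁻¹, ν∘v⁻¹)| ≤ (M_p(μ) + M_p(ν))‖u - v‖`,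
stated as the two-sided inequality. -/
theorem projected_wasserstein_lipschitz_in_direction
    (p : ℝ) (hp : 1 ≤ p) {d : ℕ}
    (μ ν : MeasureTheory.Measure (EuclideanSpace ℝ (Fin d)))
    [IsProbabilityMeasure μ] [IsProbabilityMeasure ν]
    (hμ : (∫⁻ y, (‖y‖₊ : ℝ≥0∞) ^ p ∂μ) < ⊤)
    (hν : (∫⁻ y, (‖y‖₊ : ℝ≥0∞) ^ p ∂ν) < ⊤)
    (u v : EuclideanSpace ℝ (Fin d)) (hu : ‖u‖ = 1) (hv : ‖v‖ = 1) :
    Wp p (μ.map (fun x => ⟪u, x⟫)) (ν.map (fun x => ⟪u, x⟫))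
        ≤ Wp p (μ.map (fun x => ⟪v, x⟫)) (ν.map (fun x => ⟪v, x⟫))
          + (Mp p μ + Mp p ν) * ENNReal.ofReal ‖u - v‖
    ∧ Wp p (μ.map (fun x => ⟪v, x⟫)) (ν.map (fun x => ⟪v, x⟫))
        ≤ Wp p (μ.map (fun x => ⟪u, x⟫)) (ν.map (fun x => ⟪u, x⟫))
          + (Mp p μ + Mp p ν) * ENNReal.ofReal ‖u - v‖ :=
  projected_wasserstein_lipschitz_in_direction_general p hp μ ν u v
end
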